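/- Let G be an arbitrary marked digraph with at least one marked vertex. Then N*_G = |M̄_G| + |S²_G|; that is, there exists a set Λ ⊆ V with |Λ| = |M̄_G| + |S²_G| and a control of Λ whose resulting marked digraph satisfies both Property P1 and Property P2, and no set of smaller cardinality admits such a control. -/

import Mathlib

/-- `u` is the unique in-neighbor of `w` in the digraph with edge relation `E`. -/
def UniqueInNbr {V : Type*} (E : V → V → Prop) (u w : V) : Prop :=
  E u w ∧ ∀ u', E u' w → u' = u

/-- Property P1: every simple (non-marked) vertex `v` has some vertex `v'`
whose unique in-neighbor is `v`. -/
def SatisfiesP1 {V : Type*} (E : V → V → Prop) (O : Set V) : Prop :=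
  ∀ v, v ∉ O → ∃ v', UniqueInNbr E v v'

/-- A directed (simple) cycle of length `m + 1`, given by an injective cyclic
sequence of vertices with consecutive edges (indices mod `m + 1`). -/
def IsCycle {V : Type*} (E : V → V → Prop) {m : ℕ} (c : Fin (m + 1) → V) : Prop :=
  Function.Injective c ∧ ∀ j, E (c j) (c (j + 1))

/-- A cycle `c` satisfies Property P2 if some vertex `v` off the cycle has a
vertex of the cycle as its unique in-neighbor. -/
def CycleSatisfiesP2 {V : Type*} (E : V → V → Prop) {m : ℕ} (c : Fin (m + 1) → V) : Prop :=
  ∃ v, (∀ j, c j ≠ v) ∧ ∃ j, UniqueInNbr E (c j) v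

/-- Property P2: every directed cycle consisting entirely of simple vertices
satisfies Property P2. -/
def SatisfiesP2 {V : Type*} (E : V → V → Prop) (O : Set V) : Prop :=
  ∀ (m : ℕ) (c : Fin (m + 1) → V), IsCycle E c → (∀ j, c j ∉ O) → CycleSatisfiesP2 E c


/-- `Ehat` is obtained from `E` by controlling the vertices of `Λ`: every
vertex not in `Λ` keeps exactly the same in-neighbors. -/
def Control {V : Type*} (E Ehat : V → V → Prop) (Λ : Set V) : Prop :=
  ∀ w, w ∉ Λ → ∀ u, Ehat u w ↔ E u w

/-- `Mbar E O` is the set of simple vertices that do not satisfy Property P1. -/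
def Mbar {V : Type*} (E : V → V → Prop) (O : Set V) : Set V :=
  {v | v ∉ O ∧ ¬ ∃ w, UniqueInNbr E v w}

/-- A digraph is acyclic if it contains no directed cycle. -/
def Acyclic {V : Type*} (E : V → V → Prop) : Prop :=
  ¬ ∃ (m : ℕ) (c : Fin (m + 1) → V), IsCycle E c


/-- An observed-path-compatible cycle (OP-CC): a directed cycle in which each
vertex is the unique in-neighbor of its successor (indices taken cyclically). -/
def IsOPCC {V : Type*} (E : V → V → Prop) {m : ℕ} (c : Fin (m + 1) → V) : Prop :=
  Function.Injective c ∧ ∀ j, UniqueInNbr E (c j) (c (j + 1))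

/-- `S2 E O` is the collection of (vertex sets of) OP-CCs consisting entirely
of simple vertices that do not satisfy Property P2. -/
def S2 {V : Type*} (E : V → V → Prop) (O : Set V) : Set (Set V) :=
  {S | ∃ (m : ℕ) (c : Fin (m + 1) → V),
        IsOPCC E c ∧ (∀ j, c j ∉ O) ∧ ¬ CycleSatisfiesP2 E c ∧ Set.range c = S}

/-!
Lower bound: a vertex whose in-neighbours are not controlled keeps them, so each vertex of `Mbar`
and each cycle of `S2` needs a controlled vertex whose unique in-neighbour lies on it. These
controlled vertices are distinct, since a vertex has at most one unique in-neighbour and the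
members of `Mbar` and `S2` are pairwise disjoint.

Upper bound: call `x` spare if rewiring its in-edges costs nothing. Non-spare vertices inject
into simple vertices via their unique in-neighbour, so among the vertices with a path of unique
in-neighbours to a marked vertex (a set closed under unique in-neighbours and containing `O`)
some `x` is spare. Making a vertex `t` of `Mbar`, or of a cycle of `S2`, the unique in-neighbour
of `x` removes `t` from `Mbar` and that cycle from `S2`, and creates no new element: any new
OP-CC passes through `x` and gets a P2 witness where the path from `x` leaves it. Induct on
`|Mbar| + |S2|`.
-/

open Function Relation

section

variable {V : Type*}

theorem Fin.forall_of_imp_of_add_one {m : ℕ} {p : Fin (m + 1) → Prop}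
    (h : ∀ j, p (j + 1) → p j) {j : Fin (m + 1)} (hj : p j) (i : Fin (m + 1)) : p i := by
  have key : ∀ k : Fin (m + 1), p (j - k) := by
    intro k
    induction k using Fin.induction with
    | zero => simpa using hj
    | succ k ih =>
      exact h _ (by rwa [← Fin.coeSucc_eq_succ, sub_add_eq_sub_sub, sub_add_cancel])
  simpa using key (j - i)

theorem Relation.ReflTransGen.exists_exit {r : V → V → Prop} {T : Set V} {a b : V}
    (h : ReflTransGen r a b) (ha : a ∈ T) (hb : b ∉ T) : ∃ p ∈ T, ∃ q ∉ T, r p q := by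
  induction h using ReflTransGen.head_induction_on with
  | refl => exact absurd ha hb
  | @head a c hac _ ih =>
    by_cases hc : c ∈ T
    · exact ih hc
    · exact ⟨a, ha, c, hc, hac⟩

theorem Nat.card_le_ncard_of_disjoint_of_leftUnique {ι α : Type*} [Finite α]
    {Λ : Set α} {C : ι → Set α} (hC : Pairwise (Disjoint on C)) {R : α → α → Prop}
    (hR : Relator.LeftUnique R) (h : ∀ i, ∃ w ∈ Λ, ∃ u ∈ C i, R u w) :
    Nat.card ι ≤ Λ.ncard := by
  choose w hwΛ u huC hu using h
  have hinj : Injective fun i => (⟨w i, hwΛ i⟩ : Λ) := by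
    intro i j hij
    by_contra hne
    have hwij : w i = w j := congrArg Subtype.val hij
    have huij : u i = u j := hR (hu i) (hwij ▸ hu j)
    exact Set.disjoint_left.1 (hC hne) (huC i) (huij ▸ huC j)
  exact (Nat.card_le_card_of_injective _ hinj).trans_eq (Nat.card_coe_set_eq Λ)

section Cycles

variable {E : V → V → Prop} {m : ℕ} {c : Fin (m + 1) → V}

theorem UniqueInNbr.eq {u u' w : V} (h : UniqueInNbr E u w) (h' : UniqueInNbr E u' w) :
    u = u' :=
  (h.2 u' h'.1).symm

theorem IsOPCC.isCycle (hc : IsOPCC E c) : IsCycle E c :=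
  ⟨hc.1, fun j => (hc.2 j).1⟩

theorem IsCycle.eq_add_one_of_uniqueInNbr (hc : IsCycle E c) {j k : Fin (m + 1)}
    (h : UniqueInNbr E (c j) (c k)) : k = j + 1 := by
  have hpred : E (c (k - 1)) (c k) := by simpa using hc.2 (k - 1)
  rw [← hc.1 (h.2 _ hpred), sub_add_cancel]

theorem IsCycle.eq_add_one_of_not_cycleSatisfiesP2 (hc : IsCycle E c)
    (hfail : ¬ CycleSatisfiesP2 E c) {j : Fin (m + 1)} {z : V} (hz : UniqueInNbr E (c j) z) :
    z = c (j + 1) := by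
  by_cases hzc : ∃ k, c k = z
  · obtain ⟨k, rfl⟩ := hzc
    rw [hc.eq_add_one_of_uniqueInNbr hz]
  · exact absurd ⟨z, fun k hk => hzc ⟨k, hk⟩, j, hz⟩ hfail

theorem IsCycle.isOPCC_of_not_cycleSatisfiesP2 (hc : IsCycle E c)
    (hfail : ¬ CycleSatisfiesP2 E c) (h : ∀ j, ∃ w, UniqueInNbr E (c j) w) : IsOPCC E c := by
  refine ⟨hc.1, fun j => ?_⟩
  obtain ⟨w, hw⟩ := h j
  rwa [← hc.eq_add_one_of_not_cycleSatisfiesP2 hfail hw]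

theorem IsOPCC.range_subset {T : Set V} (hc : IsOPCC E c)
    (hT : ∀ y ∈ T, ∀ u, UniqueInNbr E u y → u ∈ T) {j : Fin (m + 1)} (hj : c j ∈ T) :
    Set.range c ⊆ T := by
  rintro _ ⟨i, rfl⟩
  exact Fin.forall_of_imp_of_add_one (p := (c · ∈ T)) (fun k hk => hT _ hk _ (hc.2 k)) hj i

theorem IsOPCC.range_eq {m' : ℕ} {c' : Fin (m' + 1) → V} (hc : IsOPCC E c)
    (hc' : IsOPCC E c') {u : V} (hu : u ∈ Set.range c) (hu' : u ∈ Set.range c') :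
    Set.range c = Set.range c' := by
  have closed {n : ℕ} {d : Fin (n + 1) → V} (hd : IsOPCC E d) :
      ∀ y ∈ Set.range d, ∀ u, UniqueInNbr E u y → u ∈ Set.range d := by
    rintro _ ⟨k, rfl⟩ u hu
    exact ⟨k - 1, (hd.2 (k - 1)).eq (by simpa using hu)⟩
  obtain ⟨j, rfl⟩ := hu
  obtain ⟨j', hj'⟩ := hu'
  exact (hc.range_subset (closed hc') ⟨j', hj'⟩).antisymm
    (hc'.range_subset (closed hc) ⟨j, hj'.symm⟩)

end Cycles

section Control

variable {E E' E'' : V → V → Prop} {Λ Λ' : Set V}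

theorem Control.refl (E : V → V → Prop) (Λ : Set V) : Control E E Λ :=
  fun _ _ _ => Iff.rfl

theorem Control.trans (h : Control E E' Λ) (h' : Control E' E'' Λ') :
    Control E E'' (Λ ∪ Λ') :=
  fun w hw u => (h' w (fun hw' => hw (.inr hw')) u).trans (h w (fun hw' => hw (.inl hw')) u)

theorem Control.uniqueInNbr_iff (h : Control E E' Λ) {u w : V} (hw : w ∉ Λ) :
    UniqueInNbr E' u w ↔ UniqueInNbr E u w := by
  simp only [UniqueInNbr, h w hw]

def redirect (E : V → V → Prop) (x t : V) : V → V → Prop :=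
  fun a b => (b = x ∧ a = t) ∨ (b ≠ x ∧ E a b)

theorem control_redirect (E : V → V → Prop) (x t : V) : Control E (redirect E x t) {x} := by
  intro w hw u
  simp [redirect, Set.mem_singleton_iff.not.1 hw]

theorem uniqueInNbr_redirect_of_ne {x t u w : V} (hw : w ≠ x) :
    UniqueInNbr (redirect E x t) u w ↔ UniqueInNbr E u w :=
  (control_redirect E x t).uniqueInNbr_iff hw

theorem uniqueInNbr_redirect_self (E : V → V → Prop) (x t : V) :
    UniqueInNbr (redirect E x t) t x :=
  ⟨.inl ⟨rfl, rfl⟩, fun u' h => by simpa [redirect] using h⟩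

end Control

section Spare

variable {E : V → V → Prop} {O : Set V}

def reachMarked (E : V → V → Prop) (O : Set V) : Set V :=
  {y | ∃ o ∈ O, ReflTransGen (UniqueInNbr E) y o}

/-- The in-edges of a spare vertex can be redirected without creating new elements of `Mbar`,
nor, if the vertex lies in `reachMarked`, of `S2`. -/
def IsSpare (E : V → V → Prop) (O : Set V) (x : V) : Prop :=
  ∀ u, UniqueInNbr E u x → u ∉ O →
    (∃ z ≠ x, UniqueInNbr E u z) ∧
    ∀ (m : ℕ) (c : Fin (m + 1) → V), IsOPCC E c → (∀ j, c j ∉ O) → u ∈ Set.range c →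
      ∃ z ∉ Set.range c, z ≠ x ∧ ∃ j, UniqueInNbr E (c j) z

theorem eq_of_not_isSpare {x₁ x₂ u : V} (h₁ : ¬ IsSpare E O x₁) (h₂ : ¬ IsSpare E O x₂)
    (hu₁ : UniqueInNbr E u x₁) (hu₂ : UniqueInNbr E u x₂) : x₁ = x₂ := by
  by_contra hne
  have onCycle {x y : V} (hx : ¬ IsSpare E O x) (hux : UniqueInNbr E u x)
      (huy : UniqueInNbr E u y) (hxy : x ≠ y) :
      ∃ (n : ℕ) (d : Fin (n + 1) → V), IsOPCC E d ∧ u ∈ Set.range d ∧ y ∈ Set.range d := by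
    simp only [IsSpare] at hx
    push Not at hx
    obtain ⟨u', hu'x, -, hx⟩ := hx
    obtain rfl := hux.eq hu'x
    obtain ⟨n, d, hd, -, ⟨j, hj⟩, hx⟩ := hx ⟨y, hxy.symm, huy⟩
    exact ⟨n, d, hd, ⟨j, hj⟩, by_contra fun hy => hx y hy hxy.symm j (hj ▸ huy)⟩
  obtain ⟨n₁, d₁, hd₁, hu₁d, hx₂d⟩ := onCycle h₁ hu₁ hu₂ hne
  obtain ⟨n₂, d₂, hd₂, hu₂d, hx₁d⟩ := onCycle h₂ hu₂ hu₁ (Ne.symm hne)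
  rw [← hd₁.range_eq hd₂ hu₁d hu₂d] at hx₁d
  obtain ⟨j, rfl⟩ := hu₁d
  obtain ⟨k₁, rfl⟩ := hx₁d
  obtain ⟨k₂, rfl⟩ := hx₂d
  exact hne (by rw [hd₁.isCycle.eq_add_one_of_uniqueInNbr hu₁,
    hd₁.isCycle.eq_add_one_of_uniqueInNbr hu₂])

theorem exists_isSpare_mem_reachMarked [Finite V] (hO : O.Nonempty) :
    ∃ x ∈ reachMarked E O, IsSpare E O x := by
  by_contra! hall
  have hpred : ∀ x ∈ reachMarked E O, ∃ u, UniqueInNbr E u x ∧ u ∉ O := by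
    intro x hx
    have := hall x hx
    simp only [IsSpare, not_forall] at this
    obtain ⟨u, hu, huO, -⟩ := this
    exact ⟨u, hu, huO⟩
  choose! f hf hfO using hpred
  have hmaps : ∀ x ∈ reachMarked E O, f x ∈ reachMarked E O \ O := by
    intro x hx
    obtain ⟨o, ho, hxo⟩ := hx
    exact ⟨⟨o, ho, .head (hf x ⟨o, ho, hxo⟩) hxo⟩, hfO x ⟨o, ho, hxo⟩⟩
  have hinj : Set.InjOn f (reachMarked E O) := fun x₁ hx₁ x₂ hx₂ heq =>
    eq_of_not_isSpare (hall x₁ hx₁) (hall x₂ hx₂) (hf x₁ hx₁) (heq ▸ hf x₂ hx₂)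
  obtain ⟨o, ho⟩ := hO
  have hlt : (reachMarked E O \ O).ncard < (reachMarked E O).ncard :=
    Set.ncard_lt_ncard (Set.sdiff_ssubset_left_iff.2 ⟨o, ⟨o, ho, .refl⟩, ho⟩)
  exact hlt.not_ge (Set.ncard_le_ncard_of_injOn f hmaps hinj)

end Spare

section Redirect

variable {E : V → V → Prop} {O : Set V} {x t : V}

theorem cycleSatisfiesP2_redirect_of_mem_reachMarked {m : ℕ} {c : Fin (m + 1) → V}
    (hx : x ∈ reachMarked E O) (hs : ∀ j, c j ∉ O) (hxc : x ∈ Set.range c) :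
    CycleSatisfiesP2 (redirect E x t) c := by
  obtain ⟨o, ho, hxo⟩ := hx
  obtain ⟨_, ⟨j, rfl⟩, q, hq, hpq⟩ := hxo.exists_exit hxc fun ⟨j, hj⟩ => hs j (hj ▸ ho)
  have hqx : q ≠ x := fun h => hq (h ▸ hxc)
  exact ⟨q, fun k hk => hq ⟨k, hk⟩, j, (uniqueInNbr_redirect_of_ne hqx).2 hpq⟩

theorem mbar_redirect_subset (hx : IsSpare E O x) :
    Mbar (redirect E x t) O ⊆ Mbar E O \ {t} := by
  rintro u ⟨huO, hu⟩
  have hut : u ≠ t := fun h => hu ⟨x, h ▸ uniqueInNbr_redirect_self E x t⟩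
  refine ⟨⟨huO, fun ⟨w, hw⟩ => ?_⟩, hut⟩
  by_cases hwx : w = x
  · subst hwx
    obtain ⟨z, hzx, hz⟩ := (hx u hw huO).1
    exact hu ⟨z, (uniqueInNbr_redirect_of_ne hzx).2 hz⟩
  · exact hu ⟨w, (uniqueInNbr_redirect_of_ne hwx).2 hw⟩

theorem s2_redirect_subset (hxO : x ∈ reachMarked E O) (hx : IsSpare E O x) :
    S2 (redirect E x t) O ⊆ {S ∈ S2 E O | t ∉ S} := by
  rintro _ ⟨m, c, hc, hs, hfail, rfl⟩
  have hxc : x ∉ Set.range c := fun h =>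
    hfail (cycleSatisfiesP2_redirect_of_mem_reachMarked hxO hs h)
  have hcE : IsOPCC E c :=
    ⟨hc.1, fun j => (uniqueInNbr_redirect_of_ne fun h => hxc ⟨_, h⟩).1 (hc.2 j)⟩
  refine ⟨⟨m, c, hcE, hs, ?_, rfl⟩, ?_⟩
  · rintro ⟨z, hzc, j, hz⟩
    obtain ⟨z', hz'c, hz'x, j', hz'⟩ :
        ∃ z ∉ Set.range c, z ≠ x ∧ ∃ j, UniqueInNbr E (c j) z := by
      by_cases hzx : z = x
      · subst hzx
        exact (hx _ hz (hs j)).2 m c hcE hs ⟨j, rfl⟩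
      · exact ⟨z, fun ⟨k, hk⟩ => hzc k hk, hzx, j, hz⟩
    exact hfail ⟨z', fun k hk => hz'c ⟨k, hk⟩, j', (uniqueInNbr_redirect_of_ne hz'x).2 hz'⟩
  · rintro ⟨j, hj⟩
    exact hfail ⟨x, fun k hk => hxc ⟨k, hk⟩, j, hj ▸ uniqueInNbr_redirect_self E x t⟩

end Redirect

section Deficit

variable {E : V → V → Prop} {O : Set V}

noncomputable def controlDeficit (E : V → V → Prop) (O : Set V) : ℕ :=
  (Mbar E O).ncard + (S2 E O).ncard

theorem controlDeficit_redirect_lt [Finite V] {x t : V} (hxO : x ∈ reachMarked E O)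
    (hx : IsSpare E O x) (ht : t ∈ Mbar E O ∨ ∃ S ∈ S2 E O, t ∈ S) :
    controlDeficit (redirect E x t) O < controlDeficit E O := by
  have hM := Set.ncard_le_ncard (mbar_redirect_subset (t := t) hx)
  have hS := Set.ncard_le_ncard (s2_redirect_subset (t := t) hxO hx)
  unfold controlDeficit
  rcases ht with ht | ⟨S, hS2, htS⟩
  · have := Set.ncard_sdiff_singleton_lt_of_mem ht
    have := Set.ncard_le_ncard (Set.sep_subset (S2 E O) fun S => t ∉ S)
    omega
  · have := Set.ncard_le_ncard (Set.sdiff_subset (s := Mbar E O) (t := {t}))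
    have := Set.ncard_lt_ncard <|
      (Set.sep_subset (S2 E O) fun S => t ∉ S).ssubset_of_not_subset fun h => (h hS2).2 htS
    omega

theorem satisfiesP1_of_mbar_eq_empty (hM : Mbar E O = ∅) : SatisfiesP1 E O :=
  fun v hv => by_contra fun h => (Set.eq_empty_iff_forall_notMem.1 hM) v ⟨hv, h⟩

theorem satisfiesP2_of_mbar_eq_empty_of_s2_eq_empty (hM : Mbar E O = ∅) (hS : S2 E O = ∅) :
    SatisfiesP2 E O := by
  intro m c hc hs
  by_contra hfail
  have hc' := hc.isOPCC_of_not_cycleSatisfiesP2 hfail fun j =>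
    by_contra fun h => (Set.eq_empty_iff_forall_notMem.1 hM) (c j) ⟨hs j, h⟩
  exact (Set.eq_empty_iff_forall_notMem.1 hS) _ ⟨m, c, hc', hs, hfail, rfl⟩

end Deficit

theorem exists_control_ncard_le_controlDeficit [Finite V] {O : Set V} (hO : O.Nonempty)
    (E : V → V → Prop) :
    ∃ (Λ : Set V) (Ehat : V → V → Prop), Λ.ncard ≤ controlDeficit E O ∧ Control E Ehat Λ ∧
      SatisfiesP1 Ehat O ∧ SatisfiesP2 Ehat O := by
  induction hn : controlDeficit E O using Nat.strong_induction_on generalizing E with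
  | _ n ih =>
  by_cases h : ∃ t, t ∈ Mbar E O ∨ ∃ S ∈ S2 E O, t ∈ S
  · obtain ⟨t, ht⟩ := h
    obtain ⟨x, hxO, hx⟩ := exists_isSpare_mem_reachMarked (E := E) hO
    have hlt := controlDeficit_redirect_lt hxO hx ht
    obtain ⟨Λ, Ehat, hΛ, hctl, hP1, hP2⟩ := ih _ (hn ▸ hlt) _ rfl
    refine ⟨{x} ∪ Λ, Ehat, ?_, (control_redirect E x t).trans hctl, hP1, hP2⟩
    have := Set.ncard_union_le {x} Λ
    rw [Set.ncard_singleton] at this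
    omega
  · push Not at h
    have hM : Mbar E O = ∅ := Set.eq_empty_iff_forall_notMem.2 fun t => (h t).1
    have hS : S2 E O = ∅ := Set.eq_empty_iff_forall_notMem.2 fun S hS => by
      obtain ⟨m, c, -, -, -, rfl⟩ := id hS
      exact (h (c 0)).2 _ hS ⟨0, rfl⟩
    exact ⟨∅, E, by simp, Control.refl E ∅, satisfiesP1_of_mbar_eq_empty hM,
      satisfiesP2_of_mbar_eq_empty_of_s2_eq_empty hM hS⟩

section Lower

variable {E Ehat : V → V → Prop} {O Λ : Set V}

theorem exists_mem_control_uniqueInNbr_of_mem_mbar (hctl : Control E Ehat Λ)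
    (hP1 : SatisfiesP1 Ehat O) {v : V} (hv : v ∈ Mbar E O) :
    ∃ w ∈ Λ, UniqueInNbr Ehat v w := by
  obtain ⟨w, hw⟩ := hP1 v hv.1
  exact ⟨w, by_contra fun hwΛ => hv.2 ⟨w, (hctl.uniqueInNbr_iff hwΛ).1 hw⟩, hw⟩

theorem exists_mem_control_uniqueInNbr_of_mem_s2 (hctl : Control E Ehat Λ)
    (hP1 : SatisfiesP1 Ehat O) (hP2 : SatisfiesP2 Ehat O) {S : Set V} (hS : S ∈ S2 E O) :
    ∃ w ∈ Λ, ∃ u ∈ S, UniqueInNbr Ehat u w := by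
  obtain ⟨m, c, hc, hs, hfail, rfl⟩ := hS
  by_contra! hcΛ
  -- off `Λ` nothing changes, so the cycle survives in `Ehat` and still has no P2 witness
  have hnext : ∀ j, UniqueInNbr Ehat (c j) (c (j + 1)) := by
    intro j
    obtain ⟨w, hw⟩ := hP1 (c j) (hs j)
    have hwΛ : w ∉ Λ := fun h => hcΛ w h (c j) ⟨j, rfl⟩ hw
    rwa [← hc.isCycle.eq_add_one_of_not_cycleSatisfiesP2 hfail
      ((hctl.uniqueInNbr_iff hwΛ).1 hw)]
  obtain ⟨z, hzc, j, hz⟩ := hP2 m c ⟨hc.1, fun j => (hnext j).1⟩ hs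
  have hzΛ : z ∉ Λ := fun h => hcΛ z h (c j) ⟨j, rfl⟩ hz
  exact hfail ⟨z, hzc, j, (hctl.uniqueInNbr_iff hzΛ).1 hz⟩

theorem disjoint_mbar_of_mem_s2 {S : Set V} (hS : S ∈ S2 E O) : Disjoint (Mbar E O) S := by
  obtain ⟨m, c, hc, -, -, rfl⟩ := hS
  rw [Set.disjoint_right]
  rintro _ ⟨j, rfl⟩ hj
  exact hj.2 ⟨c (j + 1), hc.2 j⟩

theorem pairwiseDisjoint_s2 : (S2 E O).PairwiseDisjoint id := by
  rintro _ ⟨m, c, hc, -, -, rfl⟩ _ ⟨m', c', hc', -, -, rfl⟩ hne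
  exact Set.disjoint_left.2 fun u hu hu' => hne (hc.range_eq hc' hu hu')

theorem controlDeficit_le_ncard [Finite V] (hctl : Control E Ehat Λ)
    (hP1 : SatisfiesP1 Ehat O) (hP2 : SatisfiesP2 Ehat O) : controlDeficit E O ≤ Λ.ncard := by
  let C : Mbar E O ⊕ S2 E O → Set V := Sum.elim (fun v => {v.1}) (fun S => S.1)
  have hC : Pairwise (Disjoint on C) := by
    rintro (v | S) (v' | S') hne
    · exact Set.disjoint_singleton.2 fun h => hne (congrArg Sum.inl (Subtype.ext h))
    · exact Set.disjoint_singleton_left.2 <|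
        Set.disjoint_left.1 (disjoint_mbar_of_mem_s2 S'.2) v.2
    · exact Set.disjoint_singleton_right.2 <|
        Set.disjoint_left.1 (disjoint_mbar_of_mem_s2 S.2) v'.2
    · exact pairwiseDisjoint_s2 S.2 S'.2 fun h => hne (congrArg Sum.inr (Subtype.ext h))
  have := Nat.card_le_ncard_of_disjoint_of_leftUnique hC (R := UniqueInNbr Ehat)
    (fun _ _ _ h h' => h.eq h') <| by
    rintro (v | S)
    · obtain ⟨w, hwΛ, hw⟩ := exists_mem_control_uniqueInNbr_of_mem_mbar hctl hP1 v.2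
      exact ⟨w, hwΛ, v, rfl, hw⟩
    · exact exists_mem_control_uniqueInNbr_of_mem_s2 hctl hP1 hP2 S.2
  rwa [Nat.card_sum, Nat.card_coe_set_eq, Nat.card_coe_set_eq] at this

end Lower

end

/-- For an arbitrary marked digraph with at least one marked vertex,
`N*_G = |M̄_G| + |S²_G|`: there is a controlled set of that cardinality whose
control yields a marked digraph satisfying Properties P1 and P2, and no
smaller set admits such a control. -/
theorem min_controlled_card_eq_Mbar_add_S2 {V : Type*} [Fintype V]
    (E : V → V → Prop) (O : Set V) (hO : O.Nonempty) :
    (∃ (Λ : Set V) (Ehat : V → V → Prop),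
        Λ.ncard = (Mbar E O).ncard + (S2 E O).ncard ∧ Control E Ehat Λ ∧
        SatisfiesP1 Ehat O ∧ SatisfiesP2 Ehat O) ∧
    (∀ (Λ : Set V) (Ehat : V → V → Prop),
        Control E Ehat Λ → SatisfiesP1 Ehat O → SatisfiesP2 Ehat O →
        (Mbar E O).ncard + (S2 E O).ncard ≤ Λ.ncard) := by
  obtain ⟨Λ, Ehat, hΛ, hctl, hP1, hP2⟩ := exists_control_ncard_le_controlDeficit hO E
  exact ⟨⟨Λ, Ehat, hΛ.antisymm (controlDeficit_le_ncard hctl hP1 hP2), hctl, hP1, hP2⟩,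
    fun _ _ => controlDeficit_le_ncard⟩
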